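/- arXiv:2112.09519 — 3 statements merged into one kernel-verified Lean document; each statement's English description precedes it below -/
import Mathlib

section
/- Let p(a) be the joint density of random vectors (a_1,…,a_J), and for each j let π(j) ⊆ {1,…,j−1} and φ(j) ⊆ {1,…,j−1} be disjoint index sets. Define q₁(a) = ∏_j p(a_j | a_{π(j)}) and q₂(a) = ∏_j p(a_j | a_{π(j)}, a_{φ(j)}). Then KL(p ‖ q₁) − KL(p ‖ q₂) = Σ_{j=1}^J I(a_j ; a_{φ(j)} | a_{π(j)}) ≥ 0, where I denotes conditional mutual information under p. -/
/-!
Write `m_S` for the marginal density of the coordinates in `S`. Wherever the marginals are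
positive, which is almost everywhere, the logarithms split:
`log (p / ∏ a/b) - log (p / ∏ c/d) = ∑ log (c b / (a d))`, so the identity is linearity of the
integral. For one term, with `P = π j` and `B = π j ∪ φ j`, the inequality `log t ≥ 1 - 1/t`
reduces `I ≥ 0` to `∫ p · m_{j,P} m_B / (m_P m_{j,B}) ≤ 1`. Integrating first over the
coordinates outside `{j} ∪ B` replaces `p` by `m_{j,B}`, which cancels; integrating then over
`x_j` turns `m_{j,P}` into `m_P`, which cancels too, leaving at most `m_B`, whose integral is
`∫ p = 1`.
-/

open MeasureTheory Function Finset
open scoped ENNReal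

theorem ENNReal.mul_div_mul_le_div (a b c : ℝ≥0∞) : a * (b / (c * a)) ≤ b / c := by
  rcases eq_or_ne a 0 with rfl | ha0
  · simp
  rcases eq_or_ne a ⊤ with rfl | hat
  · rcases eq_or_ne c 0 with rfl | hc0
    · rcases eq_or_ne b 0 with rfl | hb0
      · simp
      · simp [ENNReal.div_zero hb0]
    · simp [ENNReal.mul_top hc0]
  · rw [← mul_div_assoc, mul_comm c a, ENNReal.mul_div_mul_left b c ha0 hat]

theorem Real.log_div_prod_sub_log_div_prod {ι : Type*} (s : Finset ι) {p : ℝ}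
    {a b c d : ι → ℝ} (hp : p ≠ 0) (ha : ∀ j ∈ s, a j ≠ 0) (hb : ∀ j ∈ s, b j ≠ 0)
    (hc : ∀ j ∈ s, c j ≠ 0) (hd : ∀ j ∈ s, d j ≠ 0) :
    Real.log (p / ∏ j ∈ s, a j / b j) - Real.log (p / ∏ j ∈ s, c j / d j)
      = ∑ j ∈ s, Real.log (c j * b j / (a j * d j)) := by
  have hab : ∏ j ∈ s, a j / b j ≠ 0 :=
    prod_ne_zero_iff.2 fun j hj => div_ne_zero (ha j hj) (hb j hj)
  have hcd : ∏ j ∈ s, c j / d j ≠ 0 :=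
    prod_ne_zero_iff.2 fun j hj => div_ne_zero (hc j hj) (hd j hj)
  rw [← Real.log_div (div_ne_zero hp hab) (div_ne_zero hp hcd), div_div_div_cancel_left' _ _ hp,
    ← prod_div_distrib, Real.log_prod fun j hj => ?_]
  · refine sum_congr rfl fun j _ => ?_
    rw [div_div_div_eq, mul_comm (d j)]
  · exact div_ne_zero (div_ne_zero (hc j hj) (hd j hj)) (div_ne_zero (ha j hj) (hb j hj))

namespace MeasureTheory

theorem integral_mul_log_nonneg_of_lintegral_div_le_one {α : Type*} [MeasurableSpace α]
    {μ : Measure α} {p g : α → ℝ}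
    (hp : Integrable p μ) (hp1 : ∫ x, p x ∂μ = 1) (hp0 : ∀ᵐ x ∂μ, 0 ≤ p x)
    (hg : ∀ᵐ x ∂μ, 0 < g x) (hlog : Integrable (fun x => p x * Real.log (g x)) μ)
    (hmeas : AEStronglyMeasurable (fun x => p x / g x) μ)
    (hle : ∫⁻ x, ENNReal.ofReal (p x / g x) ∂μ ≤ 1) :
    0 ≤ ∫ x, p x * Real.log (g x) ∂μ := by
  have hq0 : 0 ≤ᵐ[μ] fun x => p x / g x := by
    filter_upwards [hp0, hg] with x hpx hgx using div_nonneg hpx hgx.le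
  have hq : Integrable (fun x => p x / g x) μ :=
    ⟨hmeas, (hasFiniteIntegral_iff_ofReal hq0).2 (hle.trans_lt ENNReal.one_lt_top)⟩
  have hq1 : ∫ x, p x / g x ∂μ ≤ 1 := by
    rw [integral_eq_lintegral_of_nonneg_ae hq0 hmeas]
    exact ENNReal.toReal_le_of_le_ofReal zero_le_one (hle.trans ENNReal.ofReal_one.ge)
  have hpt : ∀ᵐ x ∂μ, p x - p x / g x ≤ p x * Real.log (g x) := by
    filter_upwards [hp0, hg] with x hpx hgx
    calc p x - p x / g x = p x * (1 - (g x)⁻¹) := by ring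
      _ ≤ p x * Real.log (g x) :=
        mul_le_mul_of_nonneg_left (Real.one_sub_inv_le_log_of_pos hgx) hpx
  have := integral_mono_ae (f := fun x => p x - p x / g x) (hp.sub hq) hlog hpt
  rw [integral_sub hp hq, hp1] at this
  linarith

section Marginal

variable {δ : Type*} [DecidableEq δ] {X : δ → Type*} [∀ i, MeasurableSpace (X i)]
  {μ : ∀ i, Measure (X i)}

theorem dependsOn_lmarginal (s : Finset δ) (f : (∀ i, X i) → ℝ≥0∞) :
    DependsOn (∫⋯∫⁻_s, f ∂μ) (↑s)ᶜ :=
  fun _ _ h => lmarginal_congr μ f fun i hi => h i hi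

theorem lmarginal_mul_of_dependsOn {s : Finset δ} {f g : (∀ i, X i) → ℝ≥0∞}
    (hf : Measurable f) (hg : DependsOn g (↑s)ᶜ) :
    ∫⋯∫⁻_s, (fun x => f x * g x) ∂μ = fun x => (∫⋯∫⁻_s, f ∂μ) x * g x := by
  ext x
  have hgx : ∀ y, g (updateFinset x s y) = g x :=
    fun y => hg fun i hi => by simp [updateFinset, show i ∉ s from hi]
  simp only [lmarginal, hgx]
  exact lintegral_mul_const _ (hf.comp measurable_updateFinset)

variable [Fintype δ] [∀ i, SigmaFinite (μ i)]

theorem lintegral_mul_marginal_ratio_le {f : (∀ i, X i) → ℝ≥0∞} (hf : Measurable f)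
    {P B : Finset δ} {j : δ} (hPB : P ⊆ B) (hjB : j ∉ B) :
    ∫⁻ x, f x * ((∫⋯∫⁻_(insert j P)ᶜ, f ∂μ) x * (∫⋯∫⁻_Bᶜ, f ∂μ) x /
      ((∫⋯∫⁻_Pᶜ, f ∂μ) x * (∫⋯∫⁻_(insert j B)ᶜ, f ∂μ) x)) ∂Measure.pi μ
      ≤ ∫⁻ x, f x ∂Measure.pi μ := by
  set L : Finset δ → (∀ i, X i) → ℝ≥0∞ := fun S => ∫⋯∫⁻_Sᶜ, f ∂μ
  have hLmeas : ∀ S, Measurable (L S) := fun S => hf.lmarginal μ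
  have hLdep : ∀ {S T : Finset δ}, S ⊆ T → DependsOn (L S) ↑T :=
    fun hST => (dependsOn_lmarginal _ f).mono (by simpa using hST)
  set G := fun x => L (insert j P) x * L B x / (L P x * L (insert j B) x)
  have hjP : j ∉ P := fun h => hjB (hPB h)
  have hG : DependsOn G ↑(insert j B) := fun x y h => by
    simp only [G, hLdep (insert_subset_insert j hPB) h, hLdep (subset_insert j B) h,
      hLdep (hPB.trans (subset_insert j B)) h, hLdep subset_rfl h]
  have hratio : DependsOn (fun x => L B x / L P x) (↑({j} : Finset δ))ᶜ := fun x y h => by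
    have hB : (↑B : Set δ) ⊆ (↑({j} : Finset δ))ᶜ := by
      rw [coe_singleton, Set.subset_compl_singleton_iff]
      exact hjB
    simp only [(hLdep subset_rfl).mono hB h, (hLdep hPB).mono hB h]
  have hFG : Measurable fun x => f x * G x :=
    hf.mul (((hLmeas _).mul (hLmeas _)).div ((hLmeas _).mul (hLmeas _)))
  refine lintegral_le_of_lmarginal_le Bᶜ hFG hf ?_
  calc ∫⋯∫⁻_Bᶜ, (fun x => f x * G x) ∂μ
      = ∫⋯∫⁻_{j}, (∫⋯∫⁻_(insert j B)ᶜ, (fun x => f x * G x) ∂μ) ∂μ := by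
        rw [← insert_compl_insert hjB, insert_eq,
          lmarginal_union μ _ hFG (disjoint_singleton_left.2 (by simp))]
    _ = ∫⋯∫⁻_{j}, (fun x => L (insert j B) x * G x) ∂μ := by
        rw [lmarginal_mul_of_dependsOn hf (by rwa [coe_compl, compl_compl])]
    _ ≤ ∫⋯∫⁻_{j}, (fun x => L (insert j P) x * (L B x / L P x)) ∂μ := lmarginal_mono fun x =>
        (ENNReal.mul_div_mul_le_div _ _ _).trans_eq (mul_div_assoc _ _ _)
    _ = fun x => L P x * (L B x / L P x) := by
        rw [lmarginal_mul_of_dependsOn (hLmeas _) hratio, ← lmarginal_union μ f hf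
          (disjoint_singleton_left.2 (by simp)), ← insert_eq, insert_compl_insert hjP]
    _ ≤ L B := fun x => ENNReal.mul_div_le

end Marginal

section Fiber

variable {ι : Type*} [Fintype ι] {X : ι → Type*} [∀ i, MeasurableSpace (X i)]
  {μ : ∀ i, Measure (X i)} [∀ i, SigmaFinite (μ i)]

theorem quasiMeasurePreserving_subtype_restrict (q : ι → Prop) [DecidablePred q] :
    Measure.QuasiMeasurePreserving (fun (x : ∀ i, X i) (i : {i // q i}) => x i)
      (Measure.pi μ) (Measure.pi fun i : {i // q i} => μ i) :=
  Measure.quasiMeasurePreserving_fst.comp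
    (measurePreserving_piEquivPiSubtypeProd μ q).quasiMeasurePreserving

variable [DecidableEq ι]

theorem ae_ae_fiber (S : Finset ι) {Q : (∀ i, X i) → Prop} (h : ∀ᵐ z ∂Measure.pi μ, Q z) :
    ∀ᵐ x ∂Measure.pi μ, ∀ᵐ y ∂Measure.pi (fun i : {i // i ∉ S} => μ i),
      Q (fun i => if h : i ∈ S then x i else y ⟨i, h⟩) := by
  have he := (measurePreserving_piEquivPiSubtypeProd μ (· ∈ S)).symm
  have hprod := he.quasiMeasurePreserving.ae h
  exact (quasiMeasurePreserving_subtype_restrict (· ∈ S)).ae (Measure.ae_ae_of_ae_prod hprod)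

theorem ae_integrable_fiber {E : Type*} [NormedAddCommGroup E] {p : (∀ i, X i) → E}
    (hp : Integrable p (Measure.pi μ)) (S : Finset ι) :
    ∀ᵐ x ∂Measure.pi μ, Integrable (fun y => p (fun i => if h : i ∈ S then x i else y ⟨i, h⟩))
      (Measure.pi fun i : {i // i ∉ S} => μ i) := by
  have he := measurePreserving_piEquivPiSubtypeProd μ (· ∈ S)
  have hprod := ((he.symm _).integrable_comp_emb (MeasurableEquiv.measurableEmbedding _)).2 hp
  exact (quasiMeasurePreserving_subtype_restrict (· ∈ S)).ae hprod.prod_right_ae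

theorem ae_integral_fiber_pos [∀ i, NeZero (μ i)] {p : (∀ i, X i) → ℝ}
    (hp : Integrable p (Measure.pi μ)) (hpos : ∀ x, 0 < p x) (S : Finset ι) :
    ∀ᵐ x ∂Measure.pi μ, 0 < ∫ y, p (fun i => if h : i ∈ S then x i else y ⟨i, h⟩)
      ∂Measure.pi fun i : {i // i ∉ S} => μ i := by
  filter_upwards [ae_integrable_fiber hp S] with x hint
  rw [integral_pos_iff_support_of_nonneg (fun y => (hpos _).le) hint,
    Function.support_eq_univ fun y => (hpos _).ne', Measure.pi_univ]
  exact pos_iff_ne_zero.2 <| prod_ne_zero_iff.2 fun i _ =>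
    (NeZero.ne (μ i)) ∘ Measure.measure_univ_eq_zero.1

theorem lmarginal_compl_apply (S : Finset ι) (f : (∀ i, X i) → ℝ≥0∞) (x : ∀ i, X i) :
    (∫⋯∫⁻_Sᶜ, f ∂μ) x = ∫⁻ y, f (fun i => if h : i ∈ S then x i else y ⟨i, h⟩)
      ∂Measure.pi fun i : {i // i ∉ S} => μ i := by
  let e : {i // i ∉ S} ≃ {i // i ∈ Sᶜ} := Equiv.subtypeEquivRight fun i => (mem_compl).symm
  rw [lmarginal, ← (measurePreserving_piCongrLeft (fun i : {i // i ∈ Sᶜ} => μ i) e).map_eq,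
    lintegral_map_equiv]
  refine lintegral_congr fun y => congrArg f (funext fun i => ?_)
  by_cases h : i ∈ S
  · simp [updateFinset, h]
  · simp only [updateFinset, mem_compl.2 h, dif_pos]
    exact (Equiv.piCongrLeft_apply_apply (P := fun i : {i // i ∈ Sᶜ} => X i) e y ⟨i, h⟩).trans
      (@dif_neg (i ∈ S) _ h (X i) (fun _ => x i) (fun h => y ⟨i, h⟩)).symm

theorem ae_ofReal_integral_fiber_eq_lmarginal {p : (∀ i, X i) → ℝ}
    (hp : Integrable p (Measure.pi μ)) (hp0 : ∀ x, 0 ≤ p x) {f : (∀ i, X i) → ℝ≥0∞}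
    (hf : (fun x => ENNReal.ofReal (p x)) =ᵐ[Measure.pi μ] f) (S : Finset ι) :
    ∀ᵐ x ∂Measure.pi μ, ENNReal.ofReal (∫ y, p (fun i => if h : i ∈ S then x i else y ⟨i, h⟩)
      ∂Measure.pi fun i : {i // i ∉ S} => μ i) = (∫⋯∫⁻_Sᶜ, f ∂μ) x := by
  filter_upwards [ae_integrable_fiber hp S, ae_ae_fiber S hf] with x hint hfx
  rw [ofReal_integral_eq_lintegral_ofReal hint (ae_of_all _ fun y => hp0 _),
    lmarginal_compl_apply]
  exact lintegral_congr_ae hfx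

end Fiber

section ConditionalMutualInformation

variable {ι : Type*} [Fintype ι] [DecidableEq ι] {X : ι → Type*} [∀ i, MeasurableSpace (X i)]
  {μ : ∀ i, Measure (X i)} [∀ i, SigmaFinite (μ i)] [∀ i, NeZero (μ i)]

theorem integral_mul_log_marginal_ratio_nonneg {p : (∀ i, X i) → ℝ}
    {m : Finset ι → (∀ i, X i) → ℝ} (hppos : ∀ x, 0 < p x) (hp : Integrable p (Measure.pi μ))
    (hp1 : ∫ x, p x ∂Measure.pi μ = 1)
    (hm : ∀ S x, m S x = ∫ y, p (fun i => if h : i ∈ S then x i else y ⟨i, h⟩)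
      ∂Measure.pi fun i : {i // i ∉ S} => μ i)
    {P B : Finset ι} {j : ι} (hPB : P ⊆ B) (hjB : j ∉ B)
    (hint : Integrable (fun x => p x *
      Real.log (m (insert j B) x * m P x / (m (insert j P) x * m B x))) (Measure.pi μ)) :
    0 ≤ ∫ x, p x * Real.log (m (insert j B) x * m P x / (m (insert j P) x * m B x))
      ∂Measure.pi μ := by
  have hpe : AEMeasurable (fun x => ENNReal.ofReal (p x)) (Measure.pi μ) :=
    hp.1.aemeasurable.ennreal_ofReal
  set f := hpe.mk _
  have hf : Measurable f := hpe.measurable_mk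
  have hf1 : ∫⁻ x, f x ∂Measure.pi μ = 1 := by
    rw [← lintegral_congr_ae hpe.ae_eq_mk, ← ofReal_integral_eq_lintegral_ofReal hp
      (ae_of_all _ fun x => (hppos x).le), hp1, ENNReal.ofReal_one]
  have hL : ∀ S, ∀ᵐ x ∂Measure.pi μ,
      0 < m S x ∧ ENNReal.ofReal (m S x) = (∫⋯∫⁻_Sᶜ, f ∂μ) x := by
    intro S
    filter_upwards [ae_integral_fiber_pos hp hppos S, ae_ofReal_integral_fiber_eq_lmarginal hp
      (fun x => (hppos x).le) hpe.ae_eq_mk S] with x hpos heq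
    rw [hm]
    exact ⟨hpos, heq⟩
  set G := fun x => (∫⋯∫⁻_(insert j P)ᶜ, f ∂μ) x * (∫⋯∫⁻_Bᶜ, f ∂μ) x /
      ((∫⋯∫⁻_Pᶜ, f ∂μ) x * (∫⋯∫⁻_(insert j B)ᶜ, f ∂μ) x)
  have hG : Measurable G := ((hf.lmarginal μ).mul (hf.lmarginal μ)).div
    ((hf.lmarginal μ).mul (hf.lmarginal μ))
  have hratio : ∀ᵐ x ∂Measure.pi μ, 0 < m (insert j B) x * m P x / (m (insert j P) x * m B x) ∧
      ENNReal.ofReal (p x / (m (insert j B) x * m P x / (m (insert j P) x * m B x)))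
        = f x * G x := by
    filter_upwards [hL P, hL B, hL (insert j P), hL (insert j B), hpe.ae_eq_mk]
      with x ⟨hP, hPf⟩ ⟨hB, hBf⟩ ⟨hA, hAf⟩ ⟨hC, hCf⟩ hpf
    refine ⟨by positivity, ?_⟩
    rw [div_div_eq_mul_div, mul_div_assoc, ENNReal.ofReal_mul (hppos x).le,
      ENNReal.ofReal_div_of_pos (by positivity), ENNReal.ofReal_mul hA.le,
      ENNReal.ofReal_mul hC.le, hpf, hAf, hBf, hPf, hCf,
      mul_comm ((∫⋯∫⁻_(insert j B)ᶜ, f ∂μ) x)]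
  refine integral_mul_log_nonneg_of_lintegral_div_le_one hp hp1
    (ae_of_all _ fun x => (hppos x).le) (hratio.mono fun x hx => hx.1) hint ?_ ?_
  · refine (hf.mul hG).ennreal_toReal.aestronglyMeasurable.congr (hratio.mono fun x hx => ?_)
    change (f x * G x).toReal = _
    rw [← hx.2, ENNReal.toReal_ofReal (div_nonneg (hppos x).le hx.1.le)]
  · rw [lintegral_congr_ae (hratio.mono fun x hx => hx.2), ← hf1]
    exact lintegral_mul_marginal_ratio_le hf hPB hjB

end ConditionalMutualInformation

end MeasureTheory

theorem kl_difference_is_conditional_mutual_information_general {J : ℕ}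
    (p : (Fin J → ℝ) → ℝ)
    (m : Finset (Fin J) → (Fin J → ℝ) → ℝ)
    (π φ : Fin J → Finset (Fin J))
    (hπ : ∀ j, ∀ i ∈ π j, i < j) (hφ : ∀ j, ∀ i ∈ φ j, i < j)
    (hppos : ∀ x, 0 < p x)
    (hpint : Integrable p)
    (hpone : (∫ x : Fin J → ℝ, p x) = 1)
    (hm : ∀ (S : Finset (Fin J)) (x : Fin J → ℝ),
      m S x = ∫ y : {i : Fin J // i ∉ S} → ℝ,
        p (fun i => if h : i ∈ S then x i else y ⟨i, h⟩))
    (hint1 : Integrable (fun x => p x *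
      Real.log (p x / ∏ j, (m (insert j (π j)) x / m (π j) x))))
    (hint2 : Integrable (fun x => p x *
      Real.log (p x / ∏ j, (m (insert j (π j ∪ φ j)) x / m (π j ∪ φ j) x))))
    (hintI : ∀ j, Integrable (fun x => p x *
      Real.log ((m (insert j (π j ∪ φ j)) x * m (π j) x) /
        (m (insert j (π j)) x * m (π j ∪ φ j) x)))) :
    ((∫ x : Fin J → ℝ, p x *
        Real.log (p x / ∏ j, (m (insert j (π j)) x / m (π j) x)))
      - (∫ x : Fin J → ℝ, p x *
        Real.log (p x / ∏ j, (m (insert j (π j ∪ φ j)) x / m (π j ∪ φ j) x)))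
        = ∑ j, ∫ x : Fin J → ℝ, p x *
            Real.log ((m (insert j (π j ∪ φ j)) x * m (π j) x) /
              (m (insert j (π j)) x * m (π j ∪ φ j) x))) ∧
    (0 ≤ ∑ j, ∫ x : Fin J → ℝ, p x *
        Real.log ((m (insert j (π j ∪ φ j)) x * m (π j) x) /
          (m (insert j (π j)) x * m (π j ∪ φ j) x))) := by
  have hjB : ∀ j, j ∉ π j ∪ φ j := fun j h =>
    (mem_union.1 h).elim (fun h => lt_irrefl j (hπ j j h)) fun h => lt_irrefl j (hφ j j h)
  have hmpos : ∀ᵐ x : Fin J → ℝ, ∀ S, 0 < m S x := by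
    refine ae_all_iff.2 fun S => ?_
    filter_upwards [ae_integral_fiber_pos hpint hppos S] with x hx
    rwa [hm]
  refine ⟨?_, sum_nonneg fun j _ => integral_mul_log_marginal_ratio_nonneg hppos hpint hpone hm
    subset_union_left (hjB j) (hintI j)⟩
  rw [← integral_sub hint1 hint2, ← integral_finsetSum _ fun j _ => hintI j]
  refine integral_congr_ae (hmpos.mono fun x hx => ?_)
  simp only [← mul_sub, ← mul_sum]
  rw [Real.log_div_prod_sub_log_div_prod _ (hppos x).ne' (fun j _ => (hx _).ne')
    (fun j _ => (hx _).ne') (fun j _ => (hx _).ne') (fun j _ => (hx _).ne')]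

/-- The gain in KL divergence when each factorized conditional `p(a_j | a_{π(j)})` is
enriched to `p(a_j | a_{π(j)}, a_{φ(j)})` equals the sum of the conditional mutual
informations `I(a_j ; a_{φ(j)} | a_{π(j)})`, which is nonnegative.  Here `m S` denotes
the marginal density of the coordinates in `S` under the joint density `p`. -/
theorem kl_difference_is_conditional_mutual_information {J : ℕ}
    (p : (Fin J → ℝ) → ℝ)
    (m : Finset (Fin J) → (Fin J → ℝ) → ℝ)
    (π φ : Fin J → Finset (Fin J))
    (hπ : ∀ j, ∀ i ∈ π j, i < j) (hφ : ∀ j, ∀ i ∈ φ j, i < j)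
    (hdisj : ∀ j, Disjoint (π j) (φ j))
    (hppos : ∀ x, 0 < p x)
    (hpint : Integrable p)
    (hpone : (∫ x : Fin J → ℝ, p x) = 1)
    (hm : ∀ (S : Finset (Fin J)) (x : Fin J → ℝ),
      m S x = ∫ y : {i : Fin J // i ∉ S} → ℝ,
        p (fun i => if h : i ∈ S then x i else y ⟨i, h⟩))
    (hint1 : Integrable (fun x => p x *
      Real.log (p x / ∏ j, (m (insert j (π j)) x / m (π j) x))))
    (hint2 : Integrable (fun x => p x *
      Real.log (p x / ∏ j, (m (insert j (π j ∪ φ j)) x / m (π j ∪ φ j) x))))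
    (hintI : ∀ j, Integrable (fun x => p x *
      Real.log ((m (insert j (π j ∪ φ j)) x * m (π j) x) /
        (m (insert j (π j)) x * m (π j ∪ φ j) x)))) :
    ((∫ x : Fin J → ℝ, p x *
        Real.log (p x / ∏ j, (m (insert j (π j)) x / m (π j) x)))
      - (∫ x : Fin J → ℝ, p x *
        Real.log (p x / ∏ j, (m (insert j (π j ∪ φ j)) x / m (π j ∪ φ j) x)))
        = ∑ j, ∫ x : Fin J → ℝ, p x *
            Real.log ((m (insert j (π j ∪ φ j)) x * m (π j) x) /
              (m (insert j (π j)) x * m (π j ∪ φ j) x))) ∧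
    (0 ≤ ∑ j, ∫ x : Fin J → ℝ, p x *
        Real.log ((m (insert j (π j ∪ φ j)) x * m (π j) x) /
          (m (insert j (π j)) x * m (π j ∪ φ j) x))) :=
  kl_difference_is_conditional_mutual_information_general p m π φ hπ hφ hppos hpint hpone hm hint1
    hint2 hintI
end

section
/- Let x ∼ N(0, K) on ℝ^M with K positive definite, partition indices as {1,…,M} = ⋃_j blocks, and for each block j with predecessor index set π(j) define Q_j = K_{jj} − K_{j,π(j)} K_{π(j),π(j)}⁻¹ K_{π(j),j}, F_j = K_{j,π(j)} K_{π(j),π(j)}⁻¹, and S = Fᵀ Q⁻¹ F with F unit block lower triangular (blocks −F_j in row j at columns π(j)) and Q = diag(Q_j). Then tr(S K) = M. -/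
open Matrix

/-- Submatrix of `K` on the blocks in `σ` (block index is the first component). -/
noncomputable def subK {J L : ℕ} (K : Matrix (Fin J × Fin L) (Fin J × Fin L) ℝ)
    (σ : Finset (Fin J)) :
    Matrix {p : Fin J × Fin L // p.1 ∈ σ} {p : Fin J × Fin L // p.1 ∈ σ} ℝ :=
  K.submatrix Subtype.val Subtype.val

/-- The block row `K_{j, σ}`. -/
noncomputable def crossK {J L : ℕ} (K : Matrix (Fin J × Fin L) (Fin J × Fin L) ℝ)
    (j : Fin J) (σ : Finset (Fin J)) :
    Matrix (Fin L) {p : Fin J × Fin L // p.1 ∈ σ} ℝ :=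
  Matrix.of fun a q => K (j, a) q.1

/-- The block column `K_{σ, j}`. -/
noncomputable def crossK' {J L : ℕ} (K : Matrix (Fin J × Fin L) (Fin J × Fin L) ℝ)
    (j : Fin J) (σ : Finset (Fin J)) :
    Matrix {p : Fin J × Fin L // p.1 ∈ σ} (Fin L) ℝ :=
  Matrix.of fun q b => K q.1 (j, b)

/-- Regression coefficients `F_j = K_{j,π(j)} K_{π(j),π(j)}⁻¹`. -/
noncomputable def blockF {J L : ℕ} (K : Matrix (Fin J × Fin L) (Fin J × Fin L) ℝ)
    (π : Fin J → Finset (Fin J)) (j : Fin J) :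
    Matrix (Fin L) {p : Fin J × Fin L // p.1 ∈ π j} ℝ :=
  crossK K j (π j) * (subK K (π j))⁻¹

/-- The unit block lower triangular matrix `F` with blocks `−F_j` in block row `j`
at the block columns `π(j)` and identity diagonal blocks. -/
noncomputable def Fmat {J L : ℕ} (K : Matrix (Fin J × Fin L) (Fin J × Fin L) ℝ)
    (π : Fin J → Finset (Fin J)) :
    Matrix (Fin J × Fin L) (Fin J × Fin L) ℝ :=
  Matrix.of fun p q =>
    if p.1 = q.1 then (if p.2 = q.2 then (1 : ℝ) else 0)
    else if h : q.1 ∈ π p.1 then -(blockF K π p.1 p.2 ⟨q, h⟩) else 0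

/-- Conditional covariance (Schur complement)
`Q_j = K_{jj} − K_{j,π(j)} K_{π(j),π(j)}⁻¹ K_{π(j),j}`. -/
noncomputable def Qblk {J L : ℕ} (K : Matrix (Fin J × Fin L) (Fin J × Fin L) ℝ)
    (π : Fin J → Finset (Fin J)) (j : Fin J) : Matrix (Fin L) (Fin L) ℝ :=
  (Matrix.of fun a b => K (j, a) (j, b))
    - crossK K j (π j) * (subK K (π j))⁻¹ * crossK' K j (π j)

/-- The block diagonal matrix `Q = diag(Q_j)`. -/
noncomputable def Qmat {J L : ℕ} (K : Matrix (Fin J × Fin L) (Fin J × Fin L) ℝ)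
    (π : Fin J → Finset (Fin J)) :
    Matrix (Fin J × Fin L) (Fin J × Fin L) ℝ :=
  Matrix.of fun p q => if p.1 = q.1 then Qblk K π p.1 p.2 q.2 else 0

/-- The approximate prior precision `S = Fᵀ Q⁻¹ F`. -/
noncomputable def Smat {J L : ℕ} (K : Matrix (Fin J × Fin L) (Fin J × Fin L) ℝ)
    (π : Fin J → Finset (Fin J)) :
    Matrix (Fin J × Fin L) (Fin J × Fin L) ℝ :=
  (Fmat K π)ᵀ * (Qmat K π)⁻¹ * Fmat K π

/-!
By cyclicity, `tr(S K) = tr(Q⁻¹ · F K Fᵀ)`, and since `Q⁻¹` is block diagonal only the diagonal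
blocks of `F K Fᵀ` contribute. Block row `j` of `F` is `E_j − F_j P_{π(j)}`, where `E_j` and
`P_{π(j)}` select the coordinates of block `j` and of the blocks in `π(j)`. Because
`F_j K_{π(j),π(j)} = K_{j,π(j)}`, block row `j` of `F K` vanishes on the columns of `π(j)` and
equals `Q_j` on the columns of block `j`; hence the `j`-th diagonal block of `F K Fᵀ` is `Q_j`
and `tr(S K) = Σ_j tr(Q_j⁻¹ Q_j) = J L`. Each `Q_j` is invertible, being the Schur complement of
`K_{π(j),π(j)}` in the positive definite principal submatrix of `K` on the blocks `π(j) ∪ {j}`.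
-/

theorem Fintype.sum_dite_eq_sum_subtype {α β : Type*} [Fintype α] [AddCommMonoid β]
    (p : α → Prop) [DecidablePred p] (f : Subtype p → β) :
    ∑ a, (if h : p a then f ⟨a, h⟩ else 0) = ∑ a : Subtype p, f a := by
  rw [← Fintype.sum_subtype_add_sum_subtype p,
    Finset.sum_eq_zero fun (a : {a // ¬p a}) _ => dif_neg a.2, add_zero]
  exact Finset.sum_congr rfl fun a _ => dif_pos a.2

namespace Matrix

variable {ι κ R : Type*} [Fintype ι] [Fintype κ] [DecidableEq ι]

theorem trace_blockDiagonal_submatrix_swap_mul [CommSemiring R] (B : ι → Matrix κ κ R)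
    (G : Matrix (ι × κ) (ι × κ) R) :
    ((blockDiagonal B).submatrix Prod.swap Prod.swap * G).trace =
      ∑ i, (B i * G.submatrix (Prod.mk i) (Prod.mk i)).trace := by
  simp only [trace, diag, mul_apply, Fintype.sum_prod_type, submatrix_apply, Prod.swap,
    blockDiagonal_apply, ite_mul, zero_mul]
  refine Fintype.sum_congr _ _ fun i => Fintype.sum_congr _ _ fun a => ?_
  rw [Finset.sum_comm]
  simp

theorem inv_blockDiagonal [CommRing R] [DecidableEq κ] {B : ι → Matrix κ κ R}
    (hB : ∀ i, IsUnit (B i).det) :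
    (blockDiagonal B)⁻¹ = blockDiagonal fun i => (B i)⁻¹ := by
  refine inv_eq_right_inv ?_
  simp only [← blockDiagonal_mul, mul_nonsing_inv _ (hB _)]
  exact blockDiagonal_one

theorem PosDef.isUnit_det_schurComplement {n m k R : Type*} [Fintype n] [Fintype m] [Fintype k]
    [DecidableEq n] [DecidableEq m] [DecidableEq k] [Field R] [PartialOrder R] [StarRing R]
    {M : Matrix n n R} (hM : M.PosDef) {f : m → n} {g : k → n}
    (hfg : Function.Injective (Sum.elim f g)) :
    IsUnit (M.submatrix g g - M.submatrix g f * (M.submatrix f f)⁻¹ * M.submatrix f g).det := by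
  have hblocks : M.submatrix (Sum.elim f g) (Sum.elim f g) =
      fromBlocks (M.submatrix f f) (M.submatrix f g) (M.submatrix g f) (M.submatrix g g) := by
    ext (_ | _) (_ | _) <;> rfl
  have : Invertible (M.submatrix f f) :=
    (hM.submatrix (hfg.comp Sum.inl_injective)).isUnit.invertible
  have hdet := (isUnit_iff_isUnit_det _).mp (hM.submatrix hfg).isUnit
  rw [hblocks, det_fromBlocks₁₁, invOf_eq_nonsing_inv] at hdet
  exact isUnit_of_mul_isUnit_right hdet

end Matrix

section ApproximatePrecision

variable {J L : ℕ} (K : Matrix (Fin J × Fin L) (Fin J × Fin L) ℝ) (π : Fin J → Finset (Fin J))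
  {j : Fin J}

theorem Qmat_eq_submatrix_blockDiagonal :
    Qmat K π =
      (blockDiagonal (Qblk K π)).submatrix (Equiv.prodComm _ _) (Equiv.prodComm _ _) := by
  ext p q
  simp [Qmat, blockDiagonal_apply]

theorem isUnit_det_subK (hK : K.PosDef) (σ : Finset (Fin J)) : IsUnit (subK K σ).det :=
  (isUnit_iff_isUnit_det _).mp (hK.submatrix Subtype.val_injective).isUnit

theorem isUnit_det_Qblk (hK : K.PosDef) (hj : j ∉ π j) : IsUnit (Qblk K π j).det :=
  hK.isUnit_det_schurComplement <| Subtype.val_injective.sumElim (Prod.mk_right_injective j)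
    fun q _ h => hj (by simpa [h] using q.2)

theorem Fmat_apply_mk (hj : j ∉ π j) (a : Fin L) (p : Fin J × Fin L) :
    Fmat K π (j, a) p =
      (1 : Matrix _ _ ℝ) (j, a) p - if h : p.1 ∈ π j then blockF K π j a ⟨p, h⟩ else 0 := by
  obtain ⟨i, b⟩ := p
  by_cases hji : j = i
  · subst hji
    simp [Fmat, one_apply, hj]
  · by_cases hi : i ∈ π j <;> simp [Fmat, one_apply, hji, hi]

-- Without the explicit subtype, `*` below elaborates to `CStarMatrix`'s multiplication.
theorem submatrix_Fmat_mul (hj : j ∉ π j) {n : Type*} (M : Matrix (Fin J × Fin L) n ℝ) :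
    (Fmat K π * M).submatrix (Prod.mk j) id =
      M.submatrix (Prod.mk j) id -
        blockF K π j * M.submatrix (Subtype.val (p := (·.1 ∈ π j))) id := by
  ext a c
  simp only [submatrix_apply, Matrix.sub_apply, mul_apply, Fmat_apply_mk K π hj, sub_mul,
    Finset.sum_sub_distrib, dite_mul, zero_mul]
  simp only [one_apply, ite_mul, one_mul, zero_mul, Finset.sum_ite_eq, Finset.mem_univ, if_true]
  congr 1
  exact Fintype.sum_dite_eq_sum_subtype _ fun q => blockF K π j a q * M q c

theorem submatrix_mul_Fmat_transpose (hj : j ∉ π j) {n : Type*} (M : Matrix n (Fin J × Fin L) ℝ) :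
    (M * (Fmat K π)ᵀ).submatrix id (Prod.mk j) =
      M.submatrix id (Prod.mk j) -
        M.submatrix id (Subtype.val (p := (·.1 ∈ π j))) * (blockF K π j)ᵀ := by
  rw [← transpose_transpose M, ← transpose_mul, ← transpose_submatrix,
    submatrix_Fmat_mul K π hj]
  simp only [transpose_sub, Matrix.transpose_mul, transpose_submatrix, transpose_transpose]

theorem blockF_mul_subK (hσ : IsUnit (subK K (π j)).det) :
    blockF K π j * subK K (π j) = crossK K j (π j) := by
  rw [blockF, Matrix.mul_assoc, nonsing_inv_mul _ hσ, Matrix.mul_one]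

theorem submatrix_Fmat_mul_mul_transpose (hσ : IsUnit (subK K (π j)).det) (hj : j ∉ π j) :
    (Fmat K π * K * (Fmat K π)ᵀ).submatrix (Prod.mk j) (Prod.mk j) = Qblk K π j := by
  have hX : (Fmat K π * K * (Fmat K π)ᵀ).submatrix (Prod.mk j) (Prod.mk j) =
      ((Fmat K π * K).submatrix (Prod.mk j) id * (Fmat K π)ᵀ).submatrix id (Prod.mk j) := rfl
  rw [hX, submatrix_Fmat_mul K π hj, submatrix_mul_Fmat_transpose K π hj]
  change K.submatrix (Prod.mk j) (Prod.mk j) - blockF K π j * crossK' K j (π j)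
      - (crossK K j (π j) - blockF K π j * subK K (π j)) * (blockF K π j)ᵀ = Qblk K π j
  rw [blockF_mul_subK K π hσ, sub_self, Matrix.zero_mul, sub_zero]
  rfl

end ApproximatePrecision

/-- The precision `S` of the Gaussian prior approximation built from the conditionals
`p(a_j | a_{π(j)})` of `N(0, K)` is exact on the diagonal against `K`:
`tr(S K) = M`, the dimension. -/
theorem trace_of_approximate_precision {J L : ℕ}
    (K : Matrix (Fin J × Fin L) (Fin J × Fin L) ℝ)
    (π : Fin J → Finset (Fin J))
    (hK : K.PosDef)
    (hπ : ∀ j, ∀ i ∈ π j, i < j) :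
    (Smat K π * K).trace = (Fintype.card (Fin J × Fin L) : ℝ) := by
  have hj : ∀ j, j ∉ π j := fun j h => (hπ j j h).false
  rw [Smat, Qmat_eq_submatrix_blockDiagonal, inv_submatrix_equiv,
    inv_blockDiagonal fun j => isUnit_det_Qblk K π hK (hj j), Matrix.mul_assoc _ (Fmat K π),
    trace_mul_cycle, trace_mul_comm, Equiv.coe_prodComm, trace_blockDiagonal_submatrix_swap_mul]
  simp_rw [submatrix_Fmat_mul_mul_transpose K π (isUnit_det_subK K hK _) (hj _),
    nonsing_inv_mul _ (isUnit_det_Qblk K π hK (hj _)), trace_one]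
  simp
end

section
/- Let K be a symmetric positive definite matrix indexed by blocks, and let π₁ ⊆ π₂ be two disjoint-from-j index sets. Then det( K_{jj} − K_{j,π₂} K_{π₂,π₂}⁻¹ K_{π₂,j} ) ≤ det( K_{jj} − K_{j,π₁} K_{π₁,π₁}⁻¹ K_{π₁,j} ), i.e. the determinant of the Schur complement (conditional covariance) is monotone nonincreasing in the conditioning set. -/
open Matrix

/-- Submatrix of `K` with rows in `σ` and columns in `τ`. -/
noncomputable def Ksub {ι : Type*} [Fintype ι] [DecidableEq ι]
    (K : Matrix ι ι ℝ) (σ τ : Finset ι) :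
    Matrix {i : ι // i ∈ σ} {i : ι // i ∈ τ} ℝ :=
  K.submatrix Subtype.val Subtype.val

/-- Schur complement (conditional covariance) of the block `b` given the blocks `φ`. -/
noncomputable def schurC {ι : Type*} [Fintype ι] [DecidableEq ι]
    (K : Matrix ι ι ℝ) (b φ : Finset ι) :
    Matrix {i : ι // i ∈ b} {i : ι // i ∈ b} ℝ :=
  Ksub K b b - Ksub K b φ * (Ksub K φ φ)⁻¹ * Ksub K φ b

/-!
Completing the square in the block matrix of `K` on `b ⊕ φ` shows that the quadratic form of
`schurC K b φ` at `x` is the minimum over `y` of the quadratic form of that block matrix at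
`x ⊕ y`. An optimal `y` for `π1` extends by zero to a candidate for `π2 ⊇ π1`, so
`schurC K b π2 ≤ schurC K b π1` in the Loewner order. Finally `det` is monotone on positive
semidefinite matrices: conjugating by `A^{-1/2}` reduces `det A ≤ det B` to `1 ≤ det M` for
`1 ≤ M`, where every eigenvalue of `M` is at least `1`.
-/

open scoped MatrixOrder

namespace Matrix

variable {R : Type*} {m n : Type*} [Fintype m] [Fintype n] [DecidableEq n]

theorem exists_dotProduct_submatrix_mulVec_eq [CommSemiring R] (M : Matrix n n R)
    {e : m → n} (he : Function.Injective e) (w : m → R) :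
    ∃ v : n → R, v ∘ e = w ∧ w ⬝ᵥ (M.submatrix e e *ᵥ w) = v ⬝ᵥ (M *ᵥ v) := by
  classical
  set P : Matrix n m R := (1 : Matrix n n R).submatrix id e
  have hP : Pᵀ * M * P = M.submatrix e e := by
    ext a c
    simp [P, mul_apply, one_apply, ite_mul, mul_ite]
  refine ⟨P *ᵥ w, funext fun a => ?_, ?_⟩
  · simp [P, mulVec, dotProduct, one_apply, he.eq_iff]
  · rw [← hP, ← mulVec_mulVec, ← mulVec_mulVec, mulVec_transpose, dotProduct_comm w,
      ← dotProduct_mulVec, dotProduct_comm]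

section SchurComplement

variable [CommRing R] [StarRing R]

theorem schur_complement_attained₂₂ (A : Matrix m m R) (B : Matrix m n R)
    {D : Matrix n n R} [Invertible D] (hD : D.IsHermitian) (x : m → R) :
    star (x ⊕ᵥ -((D⁻¹ * Bᴴ) *ᵥ x)) ᵥ* fromBlocks A B Bᴴ D ⬝ᵥ (x ⊕ᵥ -((D⁻¹ * Bᴴ) *ᵥ x)) =
      star x ᵥ* (A - B * D⁻¹ * Bᴴ) ⬝ᵥ x := by
  simp [schur_complement_eq₂₂ A B x _ hD]

theorem schur_complement_le₂₂ [PartialOrder R] [StarOrderedRing R]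
    (A : Matrix m m R) (B : Matrix m n R) {D : Matrix n n R} [Invertible D]
    (hD : D.PosSemidef) (x : m → R) (y : n → R) :
    star x ᵥ* (A - B * D⁻¹ * Bᴴ) ⬝ᵥ x ≤ star (x ⊕ᵥ y) ᵥ* fromBlocks A B Bᴴ D ⬝ᵥ (x ⊕ᵥ y) := by
  rw [schur_complement_eq₂₂ A B x y hD.1]
  exact le_add_of_nonneg_left (dotProduct_mulVec _ D _ ▸ hD.dotProduct_mulVec_nonneg _)

end SchurComplement

theorem one_le_det_of_one_le {M : Matrix n n ℝ} (hM : 1 ≤ M) : 1 ≤ M.det := by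
  have hH : M.IsHermitian := by simpa using hM.isHermitian.add isHermitian_one
  have h1 : ∀ i, 1 ≤ hH.eigenvalues i := by
    have := (algebraMap_le_iff_le_spectrum (r := (1 : ℝ)) hH.isSelfAdjoint).1 (by simpa using hM)
    exact fun i => this _ (hH.spectrum_real_eq_range_eigenvalues ▸ ⟨i, rfl⟩)
  rw [hH.det_eq_prod_eigenvalues]
  exact Finset.one_le_prod fun i _ => by simpa using h1 i

theorem det_le_det_of_le {A B : Matrix n n ℝ} (hA : 0 ≤ A) (hAB : A ≤ B) : A.det ≤ B.det := by
  obtain hA0 | hA0 := eq_or_ne A.det 0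
  · exact hA0 ▸ (hA.trans hAB).posSemidef.det_nonneg
  set S := CFC.sqrt A
  have hSS : S * S = A := CFC.sqrt_mul_sqrt_self A hA
  have hS : IsUnit S.det :=
    isUnit_iff_ne_zero.2 fun h => hA0 (by rw [← hSS, det_mul, h, zero_mul])
  have hSinv_star : star S⁻¹ = S⁻¹ := (CFC.sqrt_nonneg A).posSemidef.1.inv.eq
  have hSinv_conj : S⁻¹ * A * S⁻¹ = 1 := by
    rw [← hSS, ← mul_assoc, nonsing_inv_mul _ hS, one_mul, mul_nonsing_inv _ hS]
  have h1 : 1 ≤ S⁻¹ * B * S⁻¹ := by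
    simpa [hSinv_star, hSinv_conj] using star_left_conjugate_le_conjugate hAB S⁻¹
  calc A.det = A.det * 1 := (mul_one _).symm
    _ ≤ A.det * (S⁻¹ * B * S⁻¹).det :=
      mul_le_mul_of_nonneg_left (one_le_det_of_one_le h1) hA.posSemidef.det_nonneg
    _ = (S * (S⁻¹ * B * S⁻¹) * S).det := by rw [← hSS]; simp only [det_mul]; ring
    _ = B.det := by
      simp only [← mul_assoc, mul_nonsing_inv _ hS, one_mul]
      rw [mul_assoc, nonsing_inv_mul _ hS, mul_one]

end Matrix

section Ksub

variable {ι : Type*} [Fintype ι] [DecidableEq ι] {K : Matrix ι ι ℝ}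

theorem conjTranspose_Ksub (hK : K.IsHermitian) (σ τ : Finset ι) :
    (Ksub K σ τ)ᴴ = Ksub K τ σ := by
  rw [Ksub, conjTranspose_submatrix, hK.eq, Ksub]

theorem submatrix_sumElim_eq_fromBlocks_Ksub (hK : K.IsHermitian) (b φ : Finset ι) :
    K.submatrix (Sum.elim (↑) (↑) : b ⊕ φ → ι) (Sum.elim (↑) (↑)) =
      fromBlocks (Ksub K b b) (Ksub K b φ) (Ksub K b φ)ᴴ (Ksub K φ φ) := by
  rw [conjTranspose_Ksub hK]
  ext (i | i) (j | j) <;> rfl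

theorem schurC_eq_schur_complement (hK : K.IsHermitian) (b φ : Finset ι) :
    schurC K b φ = Ksub K b b - Ksub K b φ * (Ksub K φ φ)⁻¹ * (Ksub K b φ)ᴴ := by
  rw [schurC, conjTranspose_Ksub hK]

theorem Matrix.PosDef.Ksub (hK : K.PosDef) (σ : Finset ι) : (Ksub K σ σ).PosDef :=
  hK.submatrix Subtype.val_injective

theorem schurC_posSemidef (hK : K.PosDef) (b φ : Finset ι) : (schurC K b φ).PosSemidef := by
  let := (hK.Ksub φ).isUnit.invertible
  rw [schurC_eq_schur_complement hK.1]
  exact (PosDef.fromBlocks₂₂ _ _ (hK.Ksub φ)).1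
    (submatrix_sumElim_eq_fromBlocks_Ksub hK.1 b φ ▸ hK.posSemidef.submatrix _)

theorem dotProduct_schurC_mulVec_le (hK : K.PosDef) {b φ : Finset ι} (w : b ⊕ φ → ℝ) :
    (w ∘ Sum.inl) ⬝ᵥ (schurC K b φ *ᵥ (w ∘ Sum.inl)) ≤
      w ⬝ᵥ (K.submatrix (Sum.elim (↑) (↑)) (Sum.elim (↑) (↑)) *ᵥ w) := by
  let := (hK.Ksub φ).isUnit.invertible
  have h := schur_complement_le₂₂ (Ksub K b b) (Ksub K b φ) (hK.Ksub φ).posSemidef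
    (w ∘ Sum.inl) (w ∘ Sum.inr)
  rwa [Sum.elim_comp_inl_inr, ← submatrix_sumElim_eq_fromBlocks_Ksub hK.1,
    ← schurC_eq_schur_complement hK.1, star_trivial, star_trivial, ← dotProduct_mulVec,
    ← dotProduct_mulVec] at h

theorem exists_dotProduct_schurC_mulVec_eq (hK : K.PosDef) {b φ : Finset ι} (x : b → ℝ) :
    ∃ y : φ → ℝ, x ⬝ᵥ (schurC K b φ *ᵥ x) =
      (x ⊕ᵥ y) ⬝ᵥ (K.submatrix (Sum.elim (↑) (↑)) (Sum.elim (↑) (↑)) *ᵥ (x ⊕ᵥ y)) := by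
  let := (hK.Ksub φ).isUnit.invertible
  have h := schur_complement_attained₂₂ (Ksub K b b) (Ksub K b φ) (hK.Ksub φ).1 x
  rw [← submatrix_sumElim_eq_fromBlocks_Ksub hK.1, ← schurC_eq_schur_complement hK.1,
    star_trivial, star_trivial, ← dotProduct_mulVec, ← dotProduct_mulVec] at h
  exact ⟨_, h.symm⟩

theorem schurC_antitone (hK : K.PosDef) (b : Finset ι) {π1 π2 : Finset ι} (h : π1 ⊆ π2) :
    schurC K b π2 ≤ schurC K b π1 := by
  refine .of_dotProduct_mulVec_nonneg
    ((schurC_posSemidef hK b π1).1.sub (schurC_posSemidef hK b π2).1) fun x => ?_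
  have hg : Function.Injective (Sum.map id (Subtype.map id h) : b ⊕ π1 → b ⊕ π2) :=
    Function.injective_id.sumMap (Subtype.map_injective h Function.injective_id)
  obtain ⟨y, hy⟩ := exists_dotProduct_schurC_mulVec_eq hK (φ := π1) x
  obtain ⟨w, hwg, hw⟩ := exists_dotProduct_submatrix_mulVec_eq
    (K.submatrix (Sum.elim (↑) (↑)) (Sum.elim (↑) (↑))) hg (x ⊕ᵥ y)
  rw [submatrix_submatrix, Sum.elim_comp_map] at hw
  have hwx : w ∘ Sum.inl = x := by rw [← Sum.elim_comp_inl x y, ← hwg]; rfl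
  rw [star_trivial, sub_mulVec, dotProduct_sub, sub_nonneg]
  calc x ⬝ᵥ (schurC K b π2 *ᵥ x)
      ≤ w ⬝ᵥ (K.submatrix (Sum.elim (↑) (↑)) (Sum.elim (↑) (↑)) *ᵥ w) :=
        hwx ▸ dotProduct_schurC_mulVec_le hK w
    _ = x ⬝ᵥ (schurC K b π1 *ᵥ x) := hw.symm.trans hy.symm

end Ksub

theorem schur_det_monotone_general {ι : Type*} [Fintype ι] [DecidableEq ι]
    (K : Matrix ι ι ℝ) (hK : K.PosDef)
    (b π1 π2 : Finset ι)
    (hsub : π1 ⊆ π2) :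
    (schurC K b π2).det ≤ (schurC K b π1).det :=
  det_le_det_of_le (schurC_posSemidef hK b π2).nonneg (schurC_antitone hK b hsub)

/-- The determinant of the Schur complement is monotone nonincreasing in the
conditioning set. -/
theorem schur_det_monotone {ι : Type*} [Fintype ι] [DecidableEq ι]
    (K : Matrix ι ι ℝ) (hK : K.PosDef)
    (b π1 π2 : Finset ι)
    (hsub : π1 ⊆ π2) (hdisj : Disjoint π2 b) :
    (schurC K b π2).det ≤ (schurC K b π1).det :=
  schur_det_monotone_general K hK b π1 π2 hsub
end
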